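/- arXiv:1612.07618 — 7 statements merged into one kernel-verified Lean document; each statement's English description precedes it below -/
import Mathlib

section
/- Let D ⊆ ℝᵈ be nonempty and C = {λ v : v ∈ conv(D), λ ≥ 0} its generated cone. If 0 lies in the relative interior of C, then for every x ∈ D there exist finitely many points x₁,…,x_m ∈ D and weights λ₁,…,λ_{m+1} ∈ (0,1] with λ₁ + ⋯ + λ_{m+1} = 1 such that 0 = Σⱼ₌₁^m λⱼ xⱼ + λ_{m+1} x. -/
/-!
Since `0` lies in the relative interior of `C` and `x ∈ C`, the whole line `ℝ x` lies in the
affine span of `C`, so `-ε x ∈ C` for some `ε > 0`, say `-ε x = l v` with `v ∈ conv D`, `l ≥ 0`.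
Writing `v` as a convex combination of points of `D` with positive weights (Carathéodory),
`0 = l v + ε x` is a combination of points of `D` and `x` with positive weights, and dividing
by the total weight `l + ε` makes it a convex combination.
-/

open Filter Topology

section

variable {E : Type*} [AddCommGroup E] [Module ℝ E]

theorem exists_sum_eq_one_smul_eq_zero_of_pos {ι : Type*} [Fintype ι] [Nonempty ι]
    (w : ι → ℝ) (hw : ∀ i, 0 < w i) (p : ι → E) (h : ∑ i, w i • p i = 0) :
    ∃ lam : ι → ℝ, (∀ i, lam i ∈ Set.Ioc (0 : ℝ) 1) ∧ ∑ i, lam i = 1 ∧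
      ∑ i, lam i • p i = 0 := by
  have hS : 0 < ∑ i, w i := Finset.sum_pos (fun i _ => hw i) Finset.univ_nonempty
  refine ⟨fun i => w i / ∑ j, w j, fun i => ⟨div_pos (hw i) hS, ?_⟩, ?_, ?_⟩
  · rw [div_le_one hS]
    exact Finset.single_le_sum (fun j _ => (hw j).le) (Finset.mem_univ i)
  · rw [← Finset.sum_div, div_self hS.ne']
  · simp_rw [div_eq_inv_mul, mul_smul, ← Finset.smul_sum, h, smul_zero]

theorem exists_snoc_weights_of_pos {m : ℕ} (xs : Fin m → E) (x : E) (b : Fin m → ℝ)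
    (hb : ∀ j, 0 < b j) {a : ℝ} (ha : 0 < a) (h : ∑ j, b j • xs j + a • x = 0) :
    ∃ lam : Fin (m + 1) → ℝ, (∀ j, lam j ∈ Set.Ioc (0 : ℝ) 1) ∧ ∑ j, lam j = 1 ∧
      0 = ∑ j : Fin m, lam j.castSucc • xs j + lam (Fin.last m) • x := by
  have hw : ∀ j, 0 < (Fin.snoc b a : Fin (m + 1) → ℝ) j :=
    Fin.lastCases (by simpa using ha) (fun j => by simpa using hb j)
  obtain ⟨lam, hlam, hsum, hzero⟩ := exists_sum_eq_one_smul_eq_zero_of_pos _ hw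
    (Fin.snoc xs x) (by simpa [Fin.sum_univ_castSucc] using h)
  refine ⟨lam, hlam, hsum, ?_⟩
  simpa [Fin.sum_univ_castSucc, eq_comm] using hzero

end

theorem exists_fin_pos_convex_combination_of_mem_convexHull {𝕜 E : Type*} [Field 𝕜]
    [LinearOrder 𝕜] [IsStrictOrderedRing 𝕜] [AddCommGroup E] [Module 𝕜 E] {s : Set E} {x : E}
    (hx : x ∈ convexHull 𝕜 s) :
    ∃ (m : ℕ) (z : Fin m → E) (w : Fin m → 𝕜), (∀ j, z j ∈ s) ∧ (∀ j, 0 < w j) ∧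
      ∑ j, w j = 1 ∧ ∑ j, w j • z j = x := by
  obtain ⟨ι, _, z, w, hzs, -, hw, hw1, hwz⟩ := eq_pos_convex_span_of_mem_convexHull hx
  let e := Fintype.equivFin ι
  refine ⟨Fintype.card ι, z ∘ e.symm, w ∘ e.symm, fun j => hzs ⟨_, rfl⟩, fun j => hw _, ?_, ?_⟩
  · rwa [← e.symm.sum_comp] at hw1
  · rwa [← e.symm.sum_comp] at hwz

theorem eventually_smul_mem_of_zero_mem_intrinsicInterior {E : Type*} [AddCommGroup E]
    [Module ℝ E] [TopologicalSpace E] [ContinuousSMul ℝ E] {s : Set E}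
    (h0 : (0 : E) ∈ intrinsicInterior ℝ s) {x : E} (hx : x ∈ s) :
    ∀ᶠ t : ℝ in 𝓝 0, t • x ∈ s := by
  obtain ⟨y, hy, hy0⟩ := mem_intrinsicInterior.1 h0
  have hline : ∀ t : ℝ, t • x ∈ affineSpan ℝ s := fun t => by
    simpa [AffineMap.lineMap_apply] using AffineMap.lineMap_mem t
      (subset_affineSpan ℝ s (intrinsicInterior_subset h0)) (subset_affineSpan ℝ s hx)
  let g : ℝ → affineSpan ℝ s := fun t => ⟨t • x, hline t⟩
  have hg : Continuous g := (continuous_id.smul continuous_const).subtype_mk _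
  have hg0 : g 0 = y := Subtype.ext (by simp [g, hy0])
  exact (hg.tendsto 0).eventually (isOpen_interior.mem_nhds (hg0 ▸ hy))
    |>.mono fun _ ht => interior_subset (s := ((↑) ⁻¹' s : Set (affineSpan ℝ s))) ht

theorem stmt1_general {d : ℕ} (D : Set (EuclideanSpace ℝ (Fin d)))
    (C : Set (EuclideanSpace ℝ (Fin d)))
    (hC : C = {y | ∃ v ∈ convexHull ℝ D, ∃ l : ℝ, 0 ≤ l ∧ y = l • v})
    (h0 : (0 : EuclideanSpace ℝ (Fin d)) ∈ intrinsicInterior ℝ C) :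
    ∀ x ∈ D, ∃ (m : ℕ) (xs : Fin m → EuclideanSpace ℝ (Fin d))
      (lam : Fin (m + 1) → ℝ),
      (∀ j, xs j ∈ D) ∧ (∀ j, lam j ∈ Set.Ioc (0 : ℝ) 1) ∧
      (∑ j, lam j = 1) ∧
      (0 : EuclideanSpace ℝ (Fin d)) =
        (∑ j : Fin m, lam j.castSucc • xs j) + lam (Fin.last m) • x := by
  intro x hxD
  have hxC : x ∈ C := hC ▸ ⟨x, subset_convexHull ℝ D hxD, 1, zero_le_one, (one_smul _ _).symm⟩
  obtain ⟨t, htx, ht⟩ := ((eventually_smul_mem_of_zero_mem_intrinsicInterior h0 hxC).filter_mono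
    nhdsWithin_le_nhds |>.and (self_mem_nhdsWithin : Set.Iio (0 : ℝ) ∈ 𝓝[<] 0)).exists
  obtain ⟨v, hv, l, hl, htv⟩ := hC ▸ htx
  obtain ⟨m, z, w, hzD, hw, -, hwv⟩ := exists_fin_pos_convex_combination_of_mem_convexHull hv
  rcases hl.eq_or_lt with rfl | hl
  · have hx0 : x = 0 := by simpa [ht.ne] using htv
    obtain ⟨lam, hlam⟩ := exists_snoc_weights_of_pos Fin.elim0 x Fin.elim0 (fun j => j.elim0) one_pos
      (by simp [hx0])
    exact ⟨0, Fin.elim0, lam, fun j => j.elim0, hlam⟩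
  · obtain ⟨lam, hlam⟩ := exists_snoc_weights_of_pos z x (fun j => l * w j)
      (fun j => mul_pos hl (hw j)) (neg_pos.2 ht) (by
        simp_rw [mul_smul, ← Finset.smul_sum, hwv, ← htv, neg_smul, add_neg_cancel])
    exact ⟨m, z, lam, hzD, hlam⟩

/-- If 0 lies in the relative interior of the cone generated by the convex hull of a
nonempty set `D`, every point of `D` appears with positive weight in a finite convex
combination of points of `D` summing to zero. -/
theorem stmt1 {d : ℕ} (D : Set (EuclideanSpace ℝ (Fin d))) (hD : D.Nonempty)
    (C : Set (EuclideanSpace ℝ (Fin d)))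
    (hC : C = {y | ∃ v ∈ convexHull ℝ D, ∃ l : ℝ, 0 ≤ l ∧ y = l • v})
    (h0 : (0 : EuclideanSpace ℝ (Fin d)) ∈ intrinsicInterior ℝ C) :
    ∀ x ∈ D, ∃ (m : ℕ) (xs : Fin m → EuclideanSpace ℝ (Fin d))
      (lam : Fin (m + 1) → ℝ),
      (∀ j, xs j ∈ D) ∧ (∀ j, lam j ∈ Set.Ioc (0 : ℝ) 1) ∧
      (∑ j, lam j = 1) ∧
      (0 : EuclideanSpace ℝ (Fin d)) =
        (∑ j : Fin m, lam j.castSucc • xs j) + lam (Fin.last m) • x :=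
  stmt1_general D C hC h0
end

section
/- Let D ⊆ ℝᵈ be nonempty and C = {λ v : v ∈ conv(D), λ ≥ 0}. The following are equivalent: (i) for every H ∈ ℝᵈ, if H·y ≥ 0 for all y ∈ D then H·y = 0 for all y ∈ D; (ii) 0 ∈ ri(C), the relative interior of the cone C. -/
/-!
`C` is the pointed cone hull of `D`, and a linear functional is nonnegative (resp. zero) on `D`
iff it is so on `C`. If `0 ∈ ri C`, then for every `x ∈ C` also `-t • x ∈ C` for small `t > 0`,
so a functional nonnegative on `C` vanishes on it. Conversely, if every functional nonnegative on
`C` vanishes on `C`, Farkas' lemma for the closed cone `closure C` gives `-x ∈ closure C` for all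
`x ∈ C`. Taking `z ∈ ri C`, the point `0` is the midpoint of `z` and `-z ∈ closure C`, and the
midpoint of a relative interior point and a closure point of a convex set lies in its relative
interior.
-/

open Set Metric Filter Topology

section IntrinsicInterior

variable {E : Type*} [NormedAddCommGroup E] [NormedSpace ℝ E] {s : Set E} {x y : E}

theorem mem_intrinsicInterior_iff_exists_ball :
    x ∈ intrinsicInterior ℝ s ↔
      x ∈ affineSpan ℝ s ∧ ∃ ε > 0, ball x ε ∩ (affineSpan ℝ s : Set E) ⊆ s := by
  rw [mem_intrinsicInterior]
  constructor
  · rintro ⟨y, hy, rfl⟩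
    refine ⟨y.2, ?_⟩
    rw [mem_interior_iff_mem_nhds, nhds_subtype_eq_comap, mem_comap] at hy
    obtain ⟨T, hT, hTs⟩ := hy
    obtain ⟨ε, hε, hball⟩ := Metric.mem_nhds_iff.1 hT
    exact ⟨ε, hε, fun p hp => hTs (show ((⟨p, hp.2⟩ : affineSpan ℝ s) : E) ∈ T from hball hp.1)⟩
  · rintro ⟨hxA, ε, hε, hsub⟩
    refine ⟨⟨x, hxA⟩, ?_, rfl⟩
    rw [mem_interior_iff_mem_nhds, nhds_subtype_eq_comap, mem_comap]
    exact ⟨ball x ε, ball_mem_nhds _ hε, fun y hy => hsub ⟨hy, y.2⟩⟩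

theorem eventually_lineMap_mem_of_mem_intrinsicInterior (hx : x ∈ intrinsicInterior ℝ s)
    (hy : y ∈ affineSpan ℝ s) : ∀ᶠ t in 𝓝 (0 : ℝ), AffineMap.lineMap x y t ∈ s := by
  obtain ⟨hxA, ε, hε, hball⟩ := mem_intrinsicInterior_iff_exists_ball.1 hx
  have hcont : Tendsto (fun t : ℝ => AffineMap.lineMap x y t) (𝓝 0) (𝓝 x) := by
    simpa using ((AffineMap.lineMap_continuous (p := x) (q := y)).tendsto (0 : ℝ))
  filter_upwards [hcont (ball_mem_nhds x hε)] with t ht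
  exact hball ⟨ht, AffineMap.lineMap_mem t hxA hy⟩

theorem Convex.midpoint_mem_intrinsicInterior [FiniteDimensional ℝ E] (hs : Convex ℝ s)
    (hx : x ∈ intrinsicInterior ℝ s) (hy : y ∈ closure s) :
    midpoint ℝ x y ∈ intrinsicInterior ℝ s := by
  obtain ⟨hxA, ε, hε, hball⟩ := mem_intrinsicInterior_iff_exists_ball.1 hx
  obtain ⟨c, hc, hyc⟩ := Metric.mem_closure_iff.1 hy (ε / 2) (half_pos hε)
  have hcA : c ∈ affineSpan ℝ s := subset_affineSpan ℝ s hc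
  have hyA : y ∈ affineSpan ℝ s :=
    closure_minimal (subset_affineSpan ℝ s) (AffineSubspace.closed_of_finiteDimensional _) hy
  refine mem_intrinsicInterior_iff_exists_ball.2
    ⟨AffineMap.lineMap_mem _ hxA hyA, ε / 4, by positivity, ?_⟩
  rintro w ⟨hw, hwA⟩
  -- `w` is the midpoint of `c ∈ s` and its reflection `w'`, which lies close to `x`
  set w' := Equiv.pointReflection w c
  have hw'A : w' ∈ affineSpan ℝ s :=
    AffineSubspace.vadd_mem_of_mem_direction (AffineSubspace.vsub_mem_direction hwA hcA) hwA
  have hw'x : dist w' x < ε := by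
    rw [mem_ball, dist_eq_norm] at hw
    rw [dist_eq_norm] at hyc
    calc dist w' x = ‖(2 : ℝ) • (w - midpoint ℝ x y) + (y - c)‖ := by
          rw [dist_eq_norm, midpoint_eq_smul_add]
          congr 1
          simp only [w', Equiv.pointReflection_apply, vsub_eq_sub, vadd_eq_add, invOf_eq_inv]
          module
      _ ≤ 2 * ‖w - midpoint ℝ x y‖ + ‖y - c‖ := by
          simpa [norm_smul] using norm_add_le ((2 : ℝ) • (w - midpoint ℝ x y)) (y - c)
      _ < ε := by linarith
  rw [← midpoint_pointReflection_right (R := ℝ) w c]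
  exact hs.midpoint_mem hc (hball ⟨hw'x, hw'A⟩)

end IntrinsicInterior

namespace PointedCone

section Hull

variable {E : Type*} [AddCommGroup E] [Module ℝ E] {s : Set E}

theorem coe_hull_eq_nonneg_smul_convexHull (hs : s.Nonempty) :
    (hull ℝ s : Set E) = {y | ∃ v ∈ convexHull ℝ s, ∃ l : ℝ, 0 ≤ l ∧ y = l • v} := by
  refine Subset.antisymm (fun y hy => ?_) ?_
  · induction hy using Submodule.span_induction with
    | mem x hx => exact ⟨x, subset_convexHull ℝ s hx, 1, zero_le_one, (one_smul ℝ x).symm⟩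
    | zero =>
      obtain ⟨v, hv⟩ := hs
      exact ⟨v, subset_convexHull ℝ s hv, 0, le_rfl, (zero_smul ℝ v).symm⟩
    | add x y _ _ hx hy =>
      obtain ⟨v, hv, a, ha, rfl⟩ := hx
      obtain ⟨w, hw, b, hb, rfl⟩ := hy
      rcases (add_nonneg ha hb).eq_or_lt with hab | hab
      · obtain ⟨rfl, rfl⟩ : a = 0 ∧ b = 0 := by constructor <;> linarith
        exact ⟨v, hv, 0, le_rfl, by simp⟩
      · refine ⟨(a / (a + b)) • v + (b / (a + b)) • w,
          convex_iff_div.1 (convex_convexHull ℝ s) hv hw ha hb hab, a + b, hab.le, ?_⟩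
        rw [smul_add, smul_smul, smul_smul, mul_div_cancel₀ _ hab.ne', mul_div_cancel₀ _ hab.ne']
    | smul t x _ hx =>
      obtain ⟨v, hv, l, hl, rfl⟩ := hx
      exact ⟨v, hv, t * l, mul_nonneg t.2 hl, (mul_smul (t : ℝ) l v).symm⟩
  · rintro y ⟨v, hv, l, hl, rfl⟩
    exact (hull ℝ s).smul_mem hl (convexHull_min subset_hull (hull ℝ s).convex hv)

variable {F : Type*} [FunLike F E ℝ] [LinearMapClass F ℝ E ℝ] (f : F)

theorem forall_mem_hull_nonneg_iff : (∀ x ∈ hull ℝ s, 0 ≤ f x) ↔ ∀ x ∈ s, 0 ≤ f x :=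
  ⟨fun h x hx => h x (subset_hull hx), fun h _ hx =>
    (Submodule.span_le (p := (positive ℝ ℝ).comap (f : E →ₗ[ℝ] ℝ))).2 h hx⟩

theorem forall_mem_hull_eq_zero_iff : (∀ x ∈ hull ℝ s, f x = 0) ↔ ∀ x ∈ s, f x = 0 :=
  ⟨fun h x hx => h x (subset_hull hx), fun h _ hx =>
    (Submodule.span_le (p := ofSubmodule (LinearMap.ker (f : E →ₗ[ℝ] ℝ)))).2 h hx⟩

end Hull

variable {E : Type*} [NormedAddCommGroup E] [NormedSpace ℝ E] {K : PointedCone ℝ E}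

theorem apply_eq_zero_of_zero_mem_intrinsicInterior
    (h0 : (0 : E) ∈ intrinsicInterior ℝ (K : Set E)) {f : StrongDual ℝ E}
    (hf : ∀ x ∈ K, 0 ≤ f x) {x : E} (hx : x ∈ K) : f x = 0 := by
  obtain ⟨t, htx, ht⟩ := (((eventually_lineMap_mem_of_mem_intrinsicInterior h0
    (subset_affineSpan ℝ _ hx)).filter_mono nhdsWithin_le_nhds).and
      (self_mem_nhdsWithin (s := Iio (0 : ℝ)))).exists
  have hftx : 0 ≤ t * f x := by simpa [AffineMap.lineMap_apply_module] using hf _ htx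
  exact le_antisymm (nonpos_of_mul_nonneg_right hftx ht) (hf x hx)

theorem neg_mem_closure_of_forall_nonneg_imp_eq_zero
    (h : ∀ f : StrongDual ℝ E, (∀ x ∈ K, 0 ≤ f x) → ∀ x ∈ K, f x = 0) {x : E} (hx : x ∈ K) :
    -x ∈ closure (K : Set E) := by
  by_contra hnx
  obtain ⟨f, hf, hfx⟩ := ProperCone.hyperplane_separation_point (Submodule.closure K) hnx
  have hfx0 : f x = 0 := h f (fun y hy => hf y (subset_closure hy)) x hx
  simp [hfx0] at hfx

theorem zero_mem_intrinsicInterior_of_forall_neg_mem_closure [FiniteDimensional ℝ E]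
    (h : ∀ x ∈ K, -x ∈ closure (K : Set E)) : (0 : E) ∈ intrinsicInterior ℝ (K : Set E) := by
  obtain ⟨z, hz⟩ := Set.Nonempty.intrinsicInterior K.convex ⟨0, K.zero_mem⟩
  simpa using K.convex.midpoint_mem_intrinsicInterior hz (h z (intrinsicInterior_subset hz))

theorem zero_mem_intrinsicInterior_iff [FiniteDimensional ℝ E] :
    (0 : E) ∈ intrinsicInterior ℝ (K : Set E) ↔
      ∀ f : StrongDual ℝ E, (∀ x ∈ K, 0 ≤ f x) → ∀ x ∈ K, f x = 0 :=
  ⟨fun h0 _ hf _ hx => apply_eq_zero_of_zero_mem_intrinsicInterior h0 hf hx,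
    fun h => zero_mem_intrinsicInterior_of_forall_neg_mem_closure fun _ hx =>
      neg_mem_closure_of_forall_nonneg_imp_eq_zero h hx⟩

end PointedCone

/-- Absence of one-step arbitrage from price increments `D` is equivalent to
`0` lying in the relative interior of the cone generated by `conv(D)`. -/
theorem stmt2 {d : ℕ} (D : Set (EuclideanSpace ℝ (Fin d))) (hD : D.Nonempty)
    (C : Set (EuclideanSpace ℝ (Fin d)))
    (hC : C = {y | ∃ v ∈ convexHull ℝ D, ∃ l : ℝ, 0 ≤ l ∧ y = l • v}) :
    (∀ H : EuclideanSpace ℝ (Fin d),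
        (∀ y ∈ D, 0 ≤ (inner ℝ H y : ℝ)) → ∀ y ∈ D, (inner ℝ H y : ℝ) = 0) ↔
      (0 : EuclideanSpace ℝ (Fin d)) ∈ intrinsicInterior ℝ C := by
  rw [hC, ← PointedCone.coe_hull_eq_nonneg_smul_convexHull hD,
    PointedCone.zero_mem_intrinsicInterior_iff]
  simp only [PointedCone.forall_mem_hull_nonneg_iff, PointedCone.forall_mem_hull_eq_zero_iff]
  rw [(InnerProductSpace.toDual ℝ _).surjective.forall]
  simp only [InnerProductSpace.toDual_apply_apply]
end

section
/- Let Q₁, Q₂ and Q be probability measures on a measurable space and φ an integrable random variable with E_{Q₁}[φ] > 0 and E_{Q₂}[φ] < 0. Then there exist α, β, γ ∈ [0,1] with α + β + γ = 1, γ > 0, and E_{α Q₁ + β Q₂ + γ Q}[φ] = 0. -/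
open MeasureTheory

lemma mix_integral {α : Type} [MeasurableSpace α]
    (Q₁ Q₂ Q : Measure α) (φ : α → ℝ)
    (h₁i : Integrable φ Q₁) (h₂i : Integrable φ Q₂) (hi : Integrable φ Q)
    (a b c : ℝ) (ha : 0 ≤ a) (hb : 0 ≤ b) (hc : 0 ≤ c) :
    ∫ x, φ x ∂(ENNReal.ofReal a • Q₁ + ENNReal.ofReal b • Q₂ + ENNReal.ofReal c • Q)
      = a * ∫ x, φ x ∂Q₁ + b * ∫ x, φ x ∂Q₂ + c * ∫ x, φ x ∂Q := by
  have h1 := h₁i.smul_measure (ENNReal.ofReal_ne_top (r := a))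
  have h2 := h₂i.smul_measure (ENNReal.ofReal_ne_top (r := b))
  have h3 := hi.smul_measure (ENNReal.ofReal_ne_top (r := c))
  rw [integral_add_measure (h1.add_measure h2) h3, integral_add_measure h1 h2,
    integral_smul_measure, integral_smul_measure, integral_smul_measure,
    ENNReal.toReal_ofReal ha, ENNReal.toReal_ofReal hb, ENNReal.toReal_ofReal hc,
    smul_eq_mul, smul_eq_mul, smul_eq_mul]

/-- Calibration lemma: if `φ` has positive expectation under `Q₁` and negative under `Q₂`,
any third probability `Q` can be mixed in with strictly positive weight so that the convex
combination prices `φ` at zero. -/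
theorem stmt5 {α : Type} [MeasurableSpace α]
    (Q₁ Q₂ Q : Measure α) [IsProbabilityMeasure Q₁] [IsProbabilityMeasure Q₂]
    [IsProbabilityMeasure Q] (φ : α → ℝ)
    (h₁i : Integrable φ Q₁) (h₂i : Integrable φ Q₂) (hi : Integrable φ Q)
    (h₁ : 0 < ∫ x, φ x ∂Q₁) (h₂ : ∫ x, φ x ∂Q₂ < 0) :
    ∃ a b c : ℝ, a ∈ Set.Icc (0 : ℝ) 1 ∧ b ∈ Set.Icc (0 : ℝ) 1 ∧ c ∈ Set.Icc (0 : ℝ) 1 ∧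
      a + b + c = 1 ∧ 0 < c ∧
      ∫ x, φ x ∂(ENNReal.ofReal a • Q₁ + ENNReal.ofReal b • Q₂ + ENNReal.ofReal c • Q) = 0 := by
  set I₁ := ∫ x, φ x ∂Q₁ with hI₁
  set I₂ := ∫ x, φ x ∂Q₂ with hI₂
  set I := ∫ x, φ x ∂Q with hI
  rcases le_or_gt 0 I with hIpos | hIneg
  · -- use Q₂ and Q
    have hden : 0 < I - I₂ := by linarith
    set c := -I₂ / (I - I₂) with hc
    have hc0 : 0 < c := div_pos (by linarith) hden
    have hc1 : c ≤ 1 := by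
      rw [hc, div_le_one hden]; linarith
    refine ⟨0, 1 - c, c, ⟨le_refl 0, zero_le_one⟩, ⟨by linarith, by linarith⟩,
      ⟨hc0.le, hc1⟩, by ring, hc0, ?_⟩
    rw [mix_integral Q₁ Q₂ Q φ h₁i h₂i hi 0 (1 - c) c le_rfl (by linarith) hc0.le]
    rw [← hI₁, ← hI₂, ← hI, hc]
    field_simp
    ring
  · -- use Q₁ and Q
    have hden : 0 < I₁ - I := by linarith
    set c := I₁ / (I₁ - I) with hc
    have hc0 : 0 < c := div_pos h₁ hden
    have hc1 : c ≤ 1 := by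
      rw [hc, div_le_one hden]; linarith
    refine ⟨1 - c, 0, c, ⟨by linarith, by linarith⟩, ⟨le_refl 0, zero_le_one⟩,
      ⟨hc0.le, hc1⟩, by ring, hc0, ?_⟩
    rw [mix_integral Q₁ Q₂ Q φ h₁i h₂i hi (1 - c) 0 c (by linarith) le_rfl hc0.le]
    rw [← hI₁, ← hI₂, ← hI, hc]
    field_simp
    ring
end

section
/- Let Q be a probability measure, g and φ integrable, and suppose E_Q[g] ≤ sup over calibrated measures is approached along a sequence Qₘ with E_{Q̃ₘ}[φ] bounded away from 0 where Q̃ₘ ∈ {Q_inf, Q_sup} are fixed measures with E_{Q_sup}[φ] > 0 > E_{Q_inf}[φ]. If λₘ = E_{Q̃ₘ}[φ]/(E_{Q̃ₘ}[φ] − E_{Qₘ}[φ]) and either (a) λₘ → a > 0 and E_{Qₘ}[g] → +∞, or (b) λₘ → 0 and E_{Qₘ}[g]/|E_{Qₘ}[φ]| → +∞ with E_{Qₘ}[g] → +∞, then E_{λₘ Qₘ + (1−λₘ) Q̃ₘ}[g] → +∞. -/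
open MeasureTheory Filter

private lemma stmt7_aux (e G H lam : ℕ → ℝ) (κ K : ℝ) (hκ : 0 < κ) (hK : 0 ≤ K)
    (hHbd : ∀ m, |H m| ≤ K)
    (hlamb : ∀ m, κ / (κ + |e m|) ≤ lam m)
    (hcase :
      (∃ a : ℝ, 0 < a ∧ Tendsto lam atTop (nhds a) ∧ Tendsto G atTop atTop) ∨
      (Tendsto lam atTop (nhds 0) ∧ Tendsto (fun m => G m / |e m|) atTop atTop ∧
        Tendsto G atTop atTop)) :
    Tendsto (fun m => lam m * G m + (1 - lam m) * H m) atTop atTop := by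
  obtain ⟨ℓ, hℓ, hmain⟩ : ∃ ℓ, Tendsto lam atTop (nhds ℓ) ∧
      Tendsto (fun m => lam m * G m) atTop atTop := by
    rcases hcase with ⟨a, ha, hla, hGa⟩ | ⟨hl0, hr, hGa⟩
    · exact ⟨a, hla, hla.pos_mul_atTop ha hGa⟩
    · refine ⟨0, hl0, tendsto_atTop.2 fun b => ?_⟩
      filter_upwards [hGa.eventually_ge_atTop ((κ + 1) / κ * max b 0),
        hr.eventually_ge_atTop ((κ + 1) / κ * max b 0),
        hGa.eventually_ge_atTop 0] with m h1 h2 h3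
      have hem : (0:ℝ) ≤ |e m| := abs_nonneg _
      have key : κ / (κ + |e m|) * G m ≤ lam m * G m :=
        mul_le_mul_of_nonneg_right (hlamb m) h3
      rcases le_or_gt (|e m|) 1 with hc | hc
      · have h5 : κ / (κ + 1) * G m ≤ κ / (κ + |e m|) * G m := by
          apply mul_le_mul_of_nonneg_right _ h3
          apply div_le_div_of_nonneg_left hκ.le (by linarith) (by linarith)
        have hb : b ≤ κ / (κ + 1) * G m := by
          calc b ≤ max b 0 := le_max_left _ _
            _ = κ / (κ + 1) * ((κ + 1) / κ * max b 0) := by field_simp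
            _ ≤ κ / (κ + 1) * G m := mul_le_mul_of_nonneg_left h1 (by positivity)
        linarith
      · have hden : κ + |e m| ≤ (κ + 1) * |e m| := by nlinarith
        have h5 : κ / (κ + 1) * (G m / |e m|) ≤ κ / (κ + |e m|) * G m := by
          calc κ / (κ + 1) * (G m / |e m|) = (κ * G m) / ((κ + 1) * |e m|) := by
                rw [div_mul_div_comm]
            _ ≤ (κ * G m) / (κ + |e m|) :=
                div_le_div_of_nonneg_left (by positivity) (by linarith) hden
            _ = κ / (κ + |e m|) * G m := by ring
        have hb : b ≤ κ / (κ + 1) * (G m / |e m|) := by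
          calc b ≤ max b 0 := le_max_left _ _
            _ = κ / (κ + 1) * ((κ + 1) / κ * max b 0) := by field_simp
            _ ≤ κ / (κ + 1) * (G m / |e m|) :=
                mul_le_mul_of_nonneg_left h2 (by positivity)
        linarith
  have h2 : ∀ᶠ m in atTop, |1 - lam m| ≤ |1 - ℓ| + 1 := by
    have ht : Tendsto (fun m => |1 - lam m|) atTop (nhds |1 - ℓ|) :=
      (tendsto_const_nhds.sub hℓ).abs
    exact ht.eventually_le_const (by linarith)
  refine tendsto_atTop_mono' atTop ?_
    (tendsto_atTop_add_const_right atTop (-((|1 - ℓ| + 1) * K)) hmain)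
  filter_upwards [h2] with m hm
  have h3 := hHbd m
  have h4 : |(1 - lam m) * H m| ≤ (|1 - ℓ| + 1) * K := by
    rw [abs_mul]
    exact mul_le_mul hm h3 (abs_nonneg _) (by positivity)
  have h5 := neg_abs_le ((1 - lam m) * H m)
  linarith

/-- Calibrated mixtures `λₘ Qₘ + (1−λₘ) Q̃ₘ` (with `Q̃ₘ ∈ {Q_inf, Q_sup}` chosen by the
sign of `E_{Qₘ}[φ]` and `λₘ` the calibrating weight) have expectations of `g` tending
to `+∞` in either asymptotic regime (a) or (b). -/
theorem stmt7 {α : Type} [MeasurableSpace α]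
    (Qinf Qsup : Measure α) [IsProbabilityMeasure Qinf] [IsProbabilityMeasure Qsup]
    (φ g : α → ℝ)
    (hφinf : Integrable φ Qinf) (hφsup : Integrable φ Qsup)
    (hginf : Integrable g Qinf) (hgsup : Integrable g Qsup)
    (hneg : ∫ x, φ x ∂Qinf < 0) (hpos : 0 < ∫ x, φ x ∂Qsup)
    (Q : ℕ → Measure α) (hQp : ∀ m, IsProbabilityMeasure (Q m))
    (hgi : ∀ m, Integrable g (Q m)) (hφi : ∀ m, Integrable φ (Q m))
    (Qt : ℕ → Measure α)
    (hrule : ∀ m, (0 ≤ ∫ x, φ x ∂(Q m) → Qt m = Qinf) ∧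
                  (∫ x, φ x ∂(Q m) < 0 → Qt m = Qsup))
    (lam : ℕ → ℝ)
    (hlam : ∀ m, lam m =
      (∫ x, φ x ∂(Qt m)) / ((∫ x, φ x ∂(Qt m)) - ∫ x, φ x ∂(Q m)))
    (hcase :
      (∃ a : ℝ, 0 < a ∧ Tendsto lam atTop (nhds a) ∧
        Tendsto (fun m => ∫ x, g x ∂(Q m)) atTop atTop) ∨
      (Tendsto lam atTop (nhds 0) ∧
        Tendsto (fun m => (∫ x, g x ∂(Q m)) / |∫ x, φ x ∂(Q m)|) atTop atTop ∧
        Tendsto (fun m => ∫ x, g x ∂(Q m)) atTop atTop)) :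
    Tendsto (fun m => lam m * ∫ x, g x ∂(Q m) + (1 - lam m) * ∫ x, g x ∂(Qt m))
      atTop atTop := by
  set κ : ℝ := min (-(∫ x, φ x ∂Qinf)) (∫ x, φ x ∂Qsup) with hκdef
  have hκ : 0 < κ := lt_min (by linarith) hpos
  set K : ℝ := max |∫ x, g x ∂Qinf| |∫ x, g x ∂Qsup| with hKdef
  have hK : 0 ≤ K := le_trans (abs_nonneg _) (le_max_left _ _)
  apply stmt7_aux (fun m => ∫ x, φ x ∂(Q m)) _ (fun m => ∫ x, g x ∂(Qt m)) lam κ K hκ hK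
  · intro m
    rcases le_or_gt 0 (∫ x, φ x ∂(Q m)) with h | h
    · rw [(hrule m).1 h]; exact le_max_left _ _
    · rw [(hrule m).2 h]; exact le_max_right _ _
  · intro m
    rcases le_or_gt 0 (∫ x, φ x ∂(Q m)) with h | h
    · have hq := (hrule m).1 h
      set C : ℝ := -(∫ x, φ x ∂Qinf) with hC
      have hC0 : 0 < C := by linarith
      have habs : |∫ x, φ x ∂(Q m)| = ∫ x, φ x ∂(Q m) := abs_of_nonneg h
      have hl : lam m = C / (C + ∫ x, φ x ∂(Q m)) := by
        rw [hlam m, hq, div_eq_div_iff (by linarith) (by linarith), hC]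
        ring
      rw [hl, habs, div_le_div_iff₀ (by linarith) (by linarith)]
      have hκC : κ ≤ C := min_le_left _ _
      nlinarith
    · have hq := (hrule m).2 h
      set C : ℝ := ∫ x, φ x ∂Qsup with hC
      have habs : |∫ x, φ x ∂(Q m)| = -(∫ x, φ x ∂(Q m)) := abs_of_neg h
      have hl : lam m = C / (C + -(∫ x, φ x ∂(Q m))) := by
        rw [hlam m, hq, div_eq_div_iff (by linarith) (by linarith)]
        ring
      rw [hl, habs, div_le_div_iff₀ (by linarith) (by linarith)]
      have hκC : κ ≤ C := min_le_right _ _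
      nlinarith
  · exact hcase
end

section
/- Let ψ : X → ℝᵈ be a measurable closed-valued multifunction on a measurable space (X, G), and for ω ∈ X define ψ*(ω) = {H ∈ S^{d−1} : H·y ≥ 0 for all y ∈ ψ(ω)}, where S^{d−1} is the unit sphere in ℝᵈ. Then ψ* is a closed-valued G-measurable multifunction. -/
/-!
Call a direction `H` dominating `ψ ω` with margin `ε` when `ψ ω` avoids the open set
`{x | ⟪x, H⟫ < -ε ‖x‖}`; this is a measurable condition on `ω`. Every direction within `ε` of a
separating direction dominates with margin `ε`, and a limit of directions dominating with margins
tending to `0` is separating. So for a compact `K` with countable dense subset `D`, the dual cone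
of `ψ ω` meets `K` iff for every `n` some `H ∈ D` dominates with margin `1 / (n + 1)`. Since open
subsets of `ℝᵈ` are σ-compact, hitting compact sets measurably suffices.
-/

open Set Filter Topology ProperCone
open scoped RealInnerProductSpace

section HittingSets

variable {X E : Type*} [MeasurableSpace X] [TopologicalSpace E]

theorem IsOpen.isSigmaCompact [LocallyCompactSpace E] [SecondCountableTopology E] {O : Set E}
    (hO : IsOpen O) : IsSigmaCompact O :=
  have := hO.locallyCompactSpace
  isSigmaCompact_iff_sigmaCompactSpace.mpr inferInstance

theorem measurableSet_setOf_inter_nonempty_of_isSigmaCompact {F : X → Set E}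
    (hF : ∀ K, IsCompact K → MeasurableSet {ω | (F ω ∩ K).Nonempty})
    {S : Set E} (hS : IsSigmaCompact S) : MeasurableSet {ω | (F ω ∩ S).Nonempty} := by
  obtain ⟨K, hK, rfl⟩ := hS
  have : {ω | (F ω ∩ ⋃ n, K n).Nonempty} = ⋃ n, {ω | (F ω ∩ K n).Nonempty} := by
    ext ω
    simp only [inter_iUnion, nonempty_iUnion, mem_ofPred_eq, mem_iUnion]
  rw [this]
  exact .iUnion fun n => hF _ (hK n)

end HittingSets

section InnerDual

variable {E : Type*} [NormedAddCommGroup E] [InnerProductSpace ℝ E] [CompleteSpace E]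

theorem disjoint_setOf_inner_lt_of_mem_innerDual {s : Set E} {H₀ H : E} {ε : ℝ}
    (hH₀ : H₀ ∈ innerDual s) (hH : ‖H - H₀‖ ≤ ε) :
    Disjoint s {x | ⟪x, H⟫ < -ε * ‖x‖} := by
  refine disjoint_left.mpr fun x hx (hlt : ⟪x, H⟫ < -ε * ‖x‖) => ?_
  have hsep : 0 ≤ ⟪x, H₀⟫ := hH₀ hx
  have hdiff : ⟪x, H⟫ - ⟪x, H₀⟫ ≥ -(‖x‖ * ‖H - H₀‖) := by
    rw [← inner_sub_right]
    exact (abs_le.mp (abs_real_inner_le_norm x _)).1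
  have hmargin : ‖x‖ * ‖H - H₀‖ ≤ ε * ‖x‖ := by
    rw [mul_comm]
    exact mul_le_mul_of_nonneg_right hH (norm_nonneg x)
  linarith

theorem mem_innerDual_of_tendsto {s : Set E} {H : ℕ → E} {a : E} {ε : ℕ → ℝ}
    (hH : Tendsto H atTop (𝓝 a)) (hε : Tendsto ε atTop (𝓝 0))
    (hdisj : ∀ n, Disjoint s {x | ⟪x, H n⟫ < -ε n * ‖x‖}) : a ∈ innerDual s := by
  intro x hx
  have hlower : ∀ n, -ε n * ‖x‖ ≤ ⟪x, H n⟫ := fun n =>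
    not_lt.mp fun hlt => disjoint_left.mp (hdisj n) hx hlt
  have hlim : Tendsto (fun n => -ε n * ‖x‖) atTop (𝓝 0) := by
    simpa using hε.neg.mul_const ‖x‖
  exact le_of_tendsto_of_tendsto' hlim ((continuous_const.inner continuous_id).tendsto a |>.comp hH)
    hlower

variable {X : Type*} [MeasurableSpace X]

theorem measurableSet_setOf_innerDual_inter_nonempty {ψ : X → Set E}
    (hψ : ∀ O : Set E, IsOpen O → MeasurableSet {ω | (ψ ω ∩ O).Nonempty})
    {K : Set E} (hK : IsCompact K) :
    MeasurableSet {ω | ((innerDual (ψ ω) : Set E) ∩ K).Nonempty} := by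
  obtain ⟨D, hDK, hDc, hDd⟩ := hK.isSeparable.exists_countable_dense_subset
  set ε : ℕ → ℝ := fun n => 1 / ((n : ℝ) + 1)
  have hε : ∀ n, 0 < ε n := fun n => by positivity
  have hdominated : ∀ (H : E) (δ : ℝ),
      MeasurableSet {ω | Disjoint (ψ ω) {x | ⟪x, H⟫ < -δ * ‖x‖}} := fun H δ => by
    have hO : IsOpen {x : E | ⟪x, H⟫ < -δ * ‖x‖} :=
      isOpen_lt (continuous_id.inner continuous_const) (by fun_prop)
    simpa only [← not_disjoint_iff_nonempty_inter, compl_ofPred, not_not] using (hψ _ hO).compl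
  have hcharac : {ω | ((innerDual (ψ ω) : Set E) ∩ K).Nonempty} =
      ⋂ n, ⋃ H ∈ D, {ω | Disjoint (ψ ω) {x | ⟪x, H⟫ < -ε n * ‖x‖}} := by
    ext ω
    simp only [mem_iInter, mem_iUnion, mem_ofPred_eq, exists_prop]
    constructor
    · rintro ⟨H₀, hH₀, hH₀K⟩ n
      obtain ⟨H, hHD, hdist⟩ := Metric.mem_closure_iff.mp (hDd hH₀K) _ (hε n)
      exact ⟨H, hHD, disjoint_setOf_inner_lt_of_mem_innerDual hH₀
        (by rw [← dist_eq_norm, dist_comm]; exact hdist.le)⟩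
    · intro h
      choose H hHD hdisj using h
      obtain ⟨a, haK, φ, hφ, hlim⟩ := hK.tendsto_subseq fun n => hDK (hHD n)
      have hεφ : Tendsto (ε ∘ φ) atTop (𝓝 0) :=
        tendsto_one_div_add_atTop_nhds_zero_nat.comp hφ.tendsto_atTop
      exact ⟨a, mem_innerDual_of_tendsto hlim hεφ fun k => hdisj (φ k), haK⟩
  rw [hcharac]
  exact .iInter fun n => .biUnion hDc fun H _ => hdominated H (ε n)

end InnerDual

theorem stmt8_general {X : Type} [MeasurableSpace X] {d : ℕ}
    (ψ : X → Set (EuclideanSpace ℝ (Fin d)))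
    (hmeas : ∀ O : Set (EuclideanSpace ℝ (Fin d)), IsOpen O →
      MeasurableSet {ω | (ψ ω ∩ O).Nonempty})
    (ψs : X → Set (EuclideanSpace ℝ (Fin d)))
    (hψs : ψs = fun ω => {H | ‖H‖ = 1 ∧ ∀ y ∈ ψ ω, 0 ≤ (inner ℝ H y : ℝ)}) :
    (∀ ω, IsClosed (ψs ω)) ∧
    ∀ O : Set (EuclideanSpace ℝ (Fin d)), IsOpen O →
      MeasurableSet {ω | (ψs ω ∩ O).Nonempty} := by
  have hψs' : ψs = fun ω => Metric.sphere 0 1 ∩ innerDual (ψ ω) := by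
    ext ω H
    simp [hψs, real_inner_comm]
  subst hψs'
  refine ⟨fun ω => Metric.isClosed_sphere.inter (innerDual _).isClosed, fun O hO => ?_⟩
  refine measurableSet_setOf_inter_nonempty_of_isSigmaCompact (fun K hK => ?_) hO.isSigmaCompact
  simp only [inter_comm (Metric.sphere _ _), inter_assoc]
  exact measurableSet_setOf_innerDual_inter_nonempty hmeas (hK.inter_right Metric.isClosed_sphere)

/-- Preservation of measurability (Rockafellar–Wets): the multifunction of unit-norm
separating directions `ψ*(ω) = {H ∈ S^{d-1} : H·y ≥ 0 ∀ y ∈ ψ(ω)}` of a measurable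
closed-valued multifunction `ψ` is itself closed-valued and measurable. -/
theorem stmt8 {X : Type} [MeasurableSpace X] {d : ℕ}
    (ψ : X → Set (EuclideanSpace ℝ (Fin d)))
    (hclosed : ∀ ω, IsClosed (ψ ω))
    (hmeas : ∀ O : Set (EuclideanSpace ℝ (Fin d)), IsOpen O →
      MeasurableSet {ω | (ψ ω ∩ O).Nonempty})
    (ψs : X → Set (EuclideanSpace ℝ (Fin d)))
    (hψs : ψs = fun ω => {H | ‖H‖ = 1 ∧ ∀ y ∈ ψ ω, 0 ≤ (inner ℝ H y : ℝ)}) :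
    (∀ ω, IsClosed (ψs ω)) ∧
    ∀ O : Set (EuclideanSpace ℝ (Fin d)), IsOpen O →
      MeasurableSet {ω | (ψs ω ∩ O).Nonempty} :=
  stmt8_general ψ hmeas ψs hψs
end

section
/- Let K ⊆ ℝᵈ be a nonempty closed set, let {ξⁿ}_{n∈ℕ} ⊆ S^{d−1} be a countable dense subset of the set ψ* = {H ∈ S^{d−1} : H·y ≥ 0 ∀ y ∈ K} (assumed nonempty), and define ξ = Σ_{n=1}^∞ 2^{−n} ξⁿ. Then for every y ∈ K: (i) ξ·y ≥ 0; and (ii) if there exists H ∈ ψ* with H·y > 0, then ξ·y > 0. -/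
/-!
Every separating direction `ξⁿ` is nonnegative on `K`, so the inner product of `ξ` with
`y ∈ K` is a convergent series of nonnegative terms. If `H · y > 0` for some `H ∈ ψ*`, the
open half-space `{x | x · y > 0}` around `H` contains some `ξⁿ` by density, and that single
strictly positive term makes the whole series positive.
-/

open scoped RealInnerProductSpace

section

variable {ι E : Type*} [NormedAddCommGroup E] [InnerProductSpace ℝ E]

theorem HasSum.inner_right {f : ι → E} {x : E} (h : HasSum f x) (y : E) :
    HasSum (fun i => ⟪f i, y⟫) ⟪x, y⟫ :=
  ((innerSL ℝ).flip y).hasSum h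

theorem real_inner_nonneg_of_hasSum_smul {w : ι → ℝ} {v : ι → E} {ξ y : E}
    (hξ : HasSum (fun i => w i • v i) ξ) (hw : ∀ i, 0 ≤ w i) (hv : ∀ i, 0 ≤ ⟪v i, y⟫) :
    0 ≤ ⟪ξ, y⟫ := by
  refine (hξ.inner_right y).nonneg fun i => ?_
  rw [real_inner_smul_left]
  exact mul_nonneg (hw i) (hv i)

theorem real_inner_pos_of_hasSum_smul {w : ι → ℝ} {v : ι → E} {ξ y : E}
    (hξ : HasSum (fun i => w i • v i) ξ) (hw : ∀ i, 0 < w i) (hv : ∀ i, 0 ≤ ⟪v i, y⟫)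
    (i : ι) (hi : 0 < ⟪v i, y⟫) : 0 < ⟪ξ, y⟫ := by
  refine hasSum_lt (f := 0) (fun j => ?_) ?_ hasSum_zero (hξ.inner_right y) (i := i)
  · simp only [Pi.zero_apply, real_inner_smul_left]
    exact mul_nonneg (hw j).le (hv j)
  · simp only [Pi.zero_apply, real_inner_smul_left]
    exact mul_pos (hw i) hi

theorem exists_real_inner_pos_of_approx {v : ι → E} {H y : E} (hH : 0 < ⟪H, y⟫)
    (hv : ∀ ε > 0, ∃ i, ‖v i - H‖ < ε) : ∃ i, 0 < ⟪v i, y⟫ := by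
  have hopen : IsOpen {x : E | 0 < ⟪x, y⟫} :=
    isOpen_lt continuous_const (continuous_id.inner continuous_const)
  obtain ⟨ε, hε, hball⟩ := Metric.isOpen_iff.mp hopen H hH
  obtain ⟨i, hi⟩ := hv ε hε
  exact ⟨i, hball (mem_ball_iff_norm.mpr hi)⟩

end

theorem summable_two_pow_inv_smul {F : Type*} [NormedAddCommGroup F] [NormedSpace ℝ F]
    [CompleteSpace F]
    {v : ℕ → F} (hv : ∀ n, ‖v n‖ ≤ 1) : Summable fun n => ((2 : ℝ) ^ (n + 1))⁻¹ • v n := by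
  refine Summable.of_norm_bounded (g := fun n => ((2 : ℝ)⁻¹) ^ (n + 1)) ?_ fun n => ?_
  · exact (summable_geometric_of_lt_one (by norm_num) (by norm_num)).comp_injective
      (add_left_injective 1)
  · rw [norm_smul, norm_inv, norm_pow, Real.norm_two, inv_pow]
    exact mul_le_of_le_one_right (by positivity) (hv n)

theorem stmt9_general {d : ℕ} (K : Set (EuclideanSpace ℝ (Fin d)))
    (ψs : Set (EuclideanSpace ℝ (Fin d)))
    (hψs : ψs = {H | ‖H‖ = 1 ∧ ∀ y ∈ K, 0 ≤ (inner ℝ H y : ℝ)})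
    (ξs : ℕ → EuclideanSpace ℝ (Fin d))
    (hmem : ∀ n, ξs n ∈ ψs)
    (hdense : ∀ H ∈ ψs, ∀ ε > 0, ∃ n, ‖ξs n - H‖ < ε)
    (ξ : EuclideanSpace ℝ (Fin d))
    (hξ : ξ = ∑' n : ℕ, ((2 : ℝ) ^ (n + 1))⁻¹ • ξs n) :
    ∀ y ∈ K, 0 ≤ (inner ℝ ξ y : ℝ) ∧
      ((∃ H ∈ ψs, 0 < (inner ℝ H y : ℝ)) → 0 < (inner ℝ ξ y : ℝ)) := by
  subst hψs
  intro y hy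
  have hsep : ∀ n, 0 ≤ ⟪ξs n, y⟫ := fun n => (hmem n).2 y hy
  have hsum : HasSum (fun n => ((2 : ℝ) ^ (n + 1))⁻¹ • ξs n) ξ :=
    hξ ▸ (summable_two_pow_inv_smul fun n => (hmem n).1.le).hasSum
  refine ⟨real_inner_nonneg_of_hasSum_smul hsum (fun _ => by positivity) hsep, ?_⟩
  rintro ⟨H, hH, hHy⟩
  obtain ⟨n, hn⟩ := exists_real_inner_pos_of_approx hHy (hdense H hH)
  exact real_inner_pos_of_hasSum_smul hsum (fun _ => by positivity) hsep n hn

/-- The standard separator `ξ = Σ 2^{-(n+1)} ξⁿ`, built from a countable dense family of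
the unit separating directions of a closed set `K`, weakly separates `K` and is strictly
positive on `y` whenever some separating direction is. -/
theorem stmt9 {d : ℕ} (K : Set (EuclideanSpace ℝ (Fin d)))
    (hK : K.Nonempty) (hKc : IsClosed K)
    (ψs : Set (EuclideanSpace ℝ (Fin d)))
    (hψs : ψs = {H | ‖H‖ = 1 ∧ ∀ y ∈ K, 0 ≤ (inner ℝ H y : ℝ)})
    (hne : ψs.Nonempty)
    (ξs : ℕ → EuclideanSpace ℝ (Fin d))
    (hmem : ∀ n, ξs n ∈ ψs)
    (hdense : ∀ H ∈ ψs, ∀ ε > 0, ∃ n, ‖ξs n - H‖ < ε)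
    (ξ : EuclideanSpace ℝ (Fin d))
    (hξ : ξ = ∑' n : ℕ, ((2 : ℝ) ^ (n + 1))⁻¹ • ξs n) :
    ∀ y ∈ K, 0 ≤ (inner ℝ ξ y : ℝ) ∧
      ((∃ H ∈ ψs, 0 < (inner ℝ H y : ℝ)) → 0 < (inner ℝ ξ y : ℝ)) :=
  stmt9_general K ψs hψs ξs hmem hdense ξ hξ
end

section
/- Let X be a finite set, S₀ ∈ ℝᵈ, S₁ : X → ℝᵈ, and Ω ⊆ X. Suppose ω* ∈ Ω is such that for every H ∈ ℝᵈ, H·(S₁(ω̃) − S₀) ≥ 0 for all ω̃ ∈ Ω implies H·(S₁(ω̃) − S₀) = 0 for all ω̃ ∈ Ω. Then there exists a probability measure Q on X supported on finitely many points of Ω with Q({ω*}) > 0 and E_Q[S₁] = S₀. -/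
/-!
The hypothesis says that the subspace `{(f (S₁ ω - S₀))_{ω ∈ Ω} : f linear}` of `ℝ^Ω` meets the
nonnegative orthant only in `0`, hence misses the standard simplex. Strictly separating the
compact simplex from this closed subspace gives a functional `∑ c_ω x_ω` with every `c_ω < 0`
that vanishes on the subspace, i.e. weights `w = -c > 0` with `∑ w_ω (S₁ ω - S₀) = 0`
(Stiemke's lemma). Normalizing `w` gives a martingale measure charging every point of `Ω`.
-/

open Finset

theorem LinearMap.apply_eq_sum_apply_single_mul {ι R : Type*} [Fintype ι] [DecidableEq ι]
    [CommSemiring R] (φ : (ι → R) →ₗ[R] R) (x : ι → R) :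
    φ x = ∑ i, φ (Pi.single i 1) * x i := by
  conv_lhs => rw [← Finset.univ_sum_single x]
  simp only [map_sum]
  refine Finset.sum_congr rfl fun i _ => ?_
  rw [mul_comm, ← smul_eq_mul, ← map_smul, ← Pi.single_smul', smul_eq_mul, mul_one]

theorem Submodule.apply_eq_zero_of_forall_lt_apply {M : Type*} [AddCommGroup M] [Module ℝ M]
    (g : M →ₗ[ℝ] ℝ) (p : Submodule ℝ M) {c : ℝ} (h : ∀ x ∈ p, c < g x) {x : M} (hx : x ∈ p) :
    g x = 0 := by
  by_contra hgx
  have := h ((c / g x) • x) (p.smul_mem _ hx)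
  rw [map_smul, smul_eq_mul, div_mul_cancel₀ _ hgx] at this
  exact lt_irrefl _ this

section

variable {ι E : Type*} [AddCommGroup E] [Module ℝ E]

theorem exists_pos_sum_smul_eq_zero [Fintype ι] (v : ι → E)
    (h : ∀ f : Module.Dual ℝ E, (∀ i, 0 ≤ f (v i)) → ∀ i, f (v i) = 0) :
    ∃ w : ι → ℝ, (∀ i, 0 < w i) ∧ ∑ i, w i • v i = 0 := by
  classical
  set R := LinearMap.range (LinearMap.pi fun i => Module.Dual.eval ℝ E (v i))
  have hdisj : Disjoint (stdSimplex ℝ ι) R := by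
    rw [Set.disjoint_left]
    rintro _ ⟨hx₀, hx₁⟩ ⟨f, rfl⟩
    have := h f hx₀
    simp [this] at hx₁
  obtain ⟨g, u, c, hg_simplex, huc, hg_R⟩ := geometric_hahn_banach_compact_closed
    (convex_stdSimplex ℝ ι) (isCompact_stdSimplex ℝ ι) R.convex R.closed_of_finiteDimensional hdisj
  have hc : c < 0 := by simpa using hg_R 0 R.zero_mem
  have hg_neg : ∀ i, g (Pi.single i 1) < 0 := fun i =>
    (hg_simplex _ (single_mem_stdSimplex ℝ i)).trans (huc.trans hc)
  refine ⟨fun i => -g (Pi.single i 1), fun i => neg_pos.2 (hg_neg i), ?_⟩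
  rw [← Module.forall_dual_apply_eq_zero_iff ℝ]
  intro f
  have hgf := R.apply_eq_zero_of_forall_lt_apply g.toLinearMap hg_R ⟨f, rfl⟩
  rw [g.toLinearMap.apply_eq_sum_apply_single_mul] at hgf
  simpa [map_sum] using hgf

theorem Finset.exists_pos_sum_smul_eq_zero (s : Finset ι) (v : ι → E)
    (h : ∀ f : Module.Dual ℝ E, (∀ i ∈ s, 0 ≤ f (v i)) → ∀ i ∈ s, f (v i) = 0) :
    ∃ w : ι → ℝ, (∀ i ∈ s, 0 < w i) ∧ ∑ i ∈ s, w i • v i = 0 := by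
  classical
  obtain ⟨w, hw_pos, hw_sum⟩ := _root_.exists_pos_sum_smul_eq_zero (fun i : s => v i)
    fun f hf i => h f (fun j hj => hf ⟨j, hj⟩) i i.2
  refine ⟨fun i => if hi : i ∈ s then w ⟨i, hi⟩ else 0,
    fun i hi => by simpa [hi] using hw_pos _, ?_⟩
  rw [← s.sum_coe_sort]
  simpa using hw_sum

theorem Finset.sum_div_sum_smul_eq_of_sum_smul_sub_eq_zero {s : Finset ι} {w : ι → ℝ}
    {z : ι → E} {c : E} (hw : ∑ i ∈ s, w i ≠ 0)
    (h : ∑ i ∈ s, w i • (z i - c) = 0) : ∑ i ∈ s, (w i / ∑ j ∈ s, w j) • z i = c := by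
  simp_rw [smul_sub, sum_sub_distrib, ← sum_smul, sub_eq_zero] at h
  simp_rw [div_eq_inv_mul, ← smul_smul, ← smul_sum, h, smul_smul, inv_mul_cancel₀ hw, one_smul]

end

/-- One-step pointwise FTAP charging a given scenario: if every `H` with nonnegative
gains on `Ω` has identically zero gains on `Ω`, then there is a finitely supported
one-step martingale measure concentrated on `Ω` charging `ω*`. -/
theorem stmt14 {X : Type} [Fintype X] (d : ℕ)
    (S₀ : Fin d → ℝ) (S₁ : X → Fin d → ℝ) (Ω : Set X)
    (ωs : X) (hωs : ωs ∈ Ω)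
    (hNA : ∀ H : Fin d → ℝ,
      (∀ ω ∈ Ω, 0 ≤ ∑ i, H i * (S₁ ω i - S₀ i)) →
      ∀ ω ∈ Ω, ∑ i, H i * (S₁ ω i - S₀ i) = 0) :
    ∃ Q : X → ℝ, (∀ ω, 0 ≤ Q ω) ∧ (∑ ω, Q ω = 1) ∧
      (∀ ω, Q ω ≠ 0 → ω ∈ Ω) ∧ 0 < Q ωs ∧
      ∀ i, ∑ ω, Q ω * S₁ ω i = S₀ i := by
  classical
  obtain ⟨w, hw_pos, hw_sum⟩ := Ω.toFinset.exists_pos_sum_smul_eq_zero (fun ω => S₁ ω - S₀)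
    fun f hf ω hω => by
      have hf_sum (ω : X) : f (S₁ ω - S₀) = ∑ i, f (Pi.single i 1) * (S₁ ω i - S₀ i) :=
        f.apply_eq_sum_apply_single_mul _
      simp only [hf_sum, Set.mem_toFinset] at hf hω ⊢
      exact hNA _ hf ω hω
  set W := ∑ ω ∈ Ω.toFinset, w ω
  have hωs' : ωs ∈ Ω.toFinset := Set.mem_toFinset.2 hωs
  have hW : 0 < W := sum_pos hw_pos ⟨ωs, hωs'⟩
  have hmean := sum_div_sum_smul_eq_of_sum_smul_sub_eq_zero hW.ne' hw_sum
  refine ⟨fun ω => if ω ∈ Ω.toFinset then w ω / W else 0, fun ω => ?_, ?_, fun ω hω => ?_,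
    by simpa [hωs'] using div_pos (hw_pos ωs hωs') hW, fun i => ?_⟩
  · dsimp only
    split_ifs with h
    exacts [div_nonneg (hw_pos ω h).le hW.le, le_rfl]
  · rw [Fintype.sum_extend_by_zero, ← sum_div, div_self hW.ne']
  · exact Set.mem_toFinset.1 (by_contra fun h => hω (if_neg h))
  · simp only [ite_mul, zero_mul]
    rw [Fintype.sum_extend_by_zero]
    simpa using congrFun hmean i
end
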